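/- Let g = e0(2) with basis X1,X2,X3, [X1,X2]=X3, [X1,X3]=-X2, [X2,X3]=0, with the Lorentzian inner product whose matrix is [[0,1,0],[1,u,0],[0,0,v]] where u,v>0. Then the Ricci tensor matrix in this basis is [[(v-u)/v,(v²-u²)/(2v),0],[(v²-u²)/(2v),u(v²-u²)/(2v),0],[0,0,(u²-v²)/2]], the scalar curvature equals (u-v)²/(2v), and the metric is flat when u=v. -/

import Mathlib

noncomputable section

/-- The `e0(2)` bracket in the standard basis `(X1,X2,X3)`:
`[X1,X2]=X3`, `[X1,X3]=-X2`, `[X2,X3]=0`. -/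
def br (w z : Fin 3 → ℝ) : Fin 3 → ℝ :=
  ![0, -(w 0 * z 2 - w 2 * z 0), w 0 * z 1 - w 1 * z 0]

/-- The Lorentzian metric with matrix `[[0,1,0],[1,u,0],[0,0,v]]`. -/
def G (u v : ℝ) : Matrix (Fin 3) (Fin 3) ℝ := !![0, 1, 0; 1, u, 0; 0, 0, v]

/-- The corresponding inner product. -/
def ip (u v : ℝ) (x y : Fin 3 → ℝ) : ℝ := dotProduct x ((G u v).mulVec y)

/-- Explicit Levi-Civita product. -/
def Lf (u v : ℝ) (x y : Fin 3 → ℝ) : Fin 3 → ℝ :=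
  ![(u - v) / 2 * (x 2 * y 0 + x 0 * y 2 + u * (x 2 * y 1 + x 1 * y 2)),
    -(x 0 * y 2) + (v - u) / 2 * (x 2 * y 1 + x 1 * y 2),
    (2 * x 0 * y 0 + (u + v) * x 0 * y 1 + (u - v) * x 1 * y 0) / (2 * v)]

lemma ip_expand (u v : ℝ) (x y : Fin 3 → ℝ) :
    ip u v x y = x 0 * y 1 + x 1 * y 0 + u * (x 1 * y 1) + v * (x 2 * y 2) := by
  simp [ip, G, Matrix.mulVec, dotProduct, Fin.sum_univ_three]
  ring

lemma ip_ext (u v : ℝ) (hv : v ≠ 0) (w w' : Fin 3 → ℝ)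
    (h : ∀ z, ip u v w z = ip u v w' z) : w = w' := by
  have h0 := h ![1, 0, 0]
  have h1 := h ![0, 1, 0]
  have h2 := h ![0, 0, 1]
  simp [ip_expand] at h0 h1 h2
  funext i
  fin_cases i
  · show w 0 = w' 0; linear_combination h1 - u * h0
  · show w 1 = w' 1; exact h0
  · show w 2 = w' 2
    rcases h2 with h | h
    · exact h
    · exact absurd h hv

lemma Lf_koszul (u v : ℝ) (hv : v ≠ 0) (x y z : Fin 3 → ℝ) :
    2 * ip u v (Lf u v x y) z =
      ip u v (br x y) z + ip u v (br z x) y + ip u v (br z y) x := by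
  simp only [ip_expand, Lf, br]
  simp only [Matrix.cons_val_zero, Matrix.cons_val_one, Matrix.head_cons,
    Matrix.cons_val_two, Matrix.tail_cons]
  field_simp
  ring

set_option maxHeartbeats 1000000 in
/-- For `u, v > 0`: with the Levi-Civita product `L` given by Koszul's formula,
curvature `K(x,y) = L_{[x,y]} - [L_x,L_y]` and Ricci tensor
`ric(x,y) = tr(w ↦ K(x,w)y)`, the matrix of `ric` is
`[[(v-u)/v,(v²-u²)/(2v),0],[(v²-u²)/(2v),u(v²-u²)/(2v),0],[0,0,(u²-v²)/2]]`,
the scalar curvature equals `(u-v)²/(2v)`, and the metric is flat when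
`u = v`. -/
theorem ricci_e02 (u v : ℝ) (hu : 0 < u) (hv : 0 < v)
    (L : (Fin 3 → ℝ) → (Fin 3 → ℝ) → (Fin 3 → ℝ))
    (hL : ∀ x y z, 2 * ip u v (L x y) z =
      ip u v (br x y) z + ip u v (br z x) y + ip u v (br z y) x)
    (K : (Fin 3 → ℝ) → (Fin 3 → ℝ) → (Fin 3 → ℝ) → (Fin 3 → ℝ))
    (hK : ∀ x y z, K x y z = L (br x y) z - L x (L y z) + L y (L x z))
    (ric : (Fin 3 → ℝ) → (Fin 3 → ℝ) → ℝ)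
    (hric : ∀ x y, ric x y = ∑ i : Fin 3, K x (Pi.single i 1) y i) :
    (∀ i j : Fin 3, ric (Pi.single i 1) (Pi.single j 1) =
      !![(v - u) / v, (v ^ 2 - u ^ 2) / (2 * v), 0;
         (v ^ 2 - u ^ 2) / (2 * v), u * (v ^ 2 - u ^ 2) / (2 * v), 0;
         0, 0, (u ^ 2 - v ^ 2) / 2] i j) ∧
    (∀ R : Matrix (Fin 3) (Fin 3) ℝ,
      (∀ x y, ip u v (R.mulVec x) y = ric x y) →
      R.trace = (u - v) ^ 2 / (2 * v)) ∧
    (u = v → ∀ x y z, K x y z = 0) := by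
  have hv' : v ≠ 0 := ne_of_gt hv
  -- identify L with the explicit Levi-Civita product
  have hLe : ∀ x y, L x y = Lf u v x y := by
    intro x y
    refine ip_ext u v hv' _ _ (fun z => ?_)
    have h1 := hL x y z
    have h2 := Lf_koszul u v hv' x y z
    linarith [h1, h2]
  -- explicit curvature
  have hKe : ∀ x y z, K x y z =
      Lf u v (br x y) z - Lf u v x (Lf u v y z) + Lf u v y (Lf u v x z) := by
    intro x y z
    rw [hK]; simp only [hLe]
  have e0 : (Pi.single (0 : Fin 3) (1:ℝ)) = ![1, 0, 0] := by
    funext i; fin_cases i <;> simp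
  have e1 : (Pi.single (1 : Fin 3) (1:ℝ)) = ![0, 1, 0] := by
    funext i; fin_cases i <;> simp
  have e2 : (Pi.single (2 : Fin 3) (1:ℝ)) = ![0, 0, 1] := by
    funext i; fin_cases i <;> simp
  have hricmat : ∀ i j : Fin 3, ric (Pi.single i 1) (Pi.single j 1) =
      !![(v - u) / v, (v ^ 2 - u ^ 2) / (2 * v), 0;
         (v ^ 2 - u ^ 2) / (2 * v), u * (v ^ 2 - u ^ 2) / (2 * v), 0;
         0, 0, (u ^ 2 - v ^ 2) / 2] i j := by
    intro i j
    fin_cases i <;> fin_cases j <;>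
    · simp only [hric, hKe, Fin.sum_univ_three, Lf, br, Pi.sub_apply, Pi.add_apply,
        e0, e1, e2, Matrix.cons_val_zero, Matrix.cons_val_one, Matrix.cons_val_two,
        Matrix.tail_cons, Matrix.head_cons, Matrix.cons_val', Matrix.empty_val',
        Matrix.cons_val_fin_one, Pi.single_eq_same]
      norm_num
      all_goals simp [Pi.single_apply]
      all_goals field_simp
      all_goals ring
  refine ⟨hricmat, ?_, ?_⟩
  · intro R h
    have h00 := h (Pi.single 0 1) (Pi.single 0 1)
    have h01 := h (Pi.single 0 1) (Pi.single 1 1)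
    have h10 := h (Pi.single 1 1) (Pi.single 0 1)
    have h22 := h (Pi.single 2 1) (Pi.single 2 1)
    rw [hricmat 0 0] at h00
    rw [hricmat 0 1] at h01
    rw [hricmat 1 0] at h10
    rw [hricmat 2 2] at h22
    simp only [ip_expand, e0, e1, e2, Matrix.mulVec, dotProduct,
      Fin.sum_univ_three, Matrix.cons_val_zero, Matrix.cons_val_one, Matrix.cons_val_two,
      Matrix.tail_cons, Matrix.head_cons, Matrix.of_apply] at h00 h01 h10 h22
    norm_num at h00 h01 h10 h22
    simp only [Matrix.trace, Matrix.diag, Fin.sum_univ_three]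
    have h22' : R 2 2 = (u ^ 2 - v ^ 2) / (2 * v) := by
      field_simp
      linarith [h22]
    linear_combination h01 - u * h00 + h10 + h22'
  · intro huv x y z
    subst huv
    rw [hKe]
    funext i
    fin_cases i <;>
    · simp only [Lf, br, Pi.sub_apply, Pi.add_apply, Matrix.cons_val_zero,
        Matrix.cons_val_one, Matrix.cons_val_two, Matrix.tail_cons, Matrix.head_cons]
      all_goals field_simp
      all_goals ring
      all_goals simp
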